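/- arXiv:1002.1718 — 4 statements merged into one kernel-verified Lean document; each statement's English description precedes it below -/
import Mathlib

section
/- Let γ ∈ [0,1) and l ≥ 0 be real numbers, let X ≥ 1 be an integer, and let o, r, w : {1,…,X} → ℝ be finite sequences such that, writing σ(x) = x+1 for x < X and σ(X) = 1 for the cyclic successor, the following hold for every x ∈ {1,…,X}: (i) o(x) ≤ (1−γ)·r(x) + γ·w(x) ≤ o(x) + l, and (ii) o(σ(x)) ≤ w(x) ≤ o(σ(x)) + l. Then o(1) ≤ (1−γ)·∑_{x=1}^{X} γ^{x−1} r(x) + γ^X · o(1) + γ·l·(1 − γ^X)/(1 − γ). -/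
/-- cycle inequalities of the equilibrium graph imply the bound
o(1) ≤ (1−γ)·∑_{x=1}^{X} γ^{x−1} r(x) + γ^X·o(1) + γ·l·(1 − γ^X)/(1 − γ). -/
theorem cycle_origin_bound (γ l : ℝ) (hγ0 : 0 ≤ γ) (hγ1 : γ < 1) (hl : 0 ≤ l)
    (X : ℕ) (hX : 1 ≤ X) (o r w : ℕ → ℝ)
    (h1 : ∀ x, 1 ≤ x → x ≤ X →
      o x ≤ (1 - γ) * r x + γ * w x ∧ (1 - γ) * r x + γ * w x ≤ o x + l)
    (h2 : ∀ x, 1 ≤ x → x ≤ X →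
      o (if x < X then x + 1 else 1) ≤ w x ∧ w x ≤ o (if x < X then x + 1 else 1) + l) :
    o 1 ≤ (1 - γ) * ∑ x ∈ Finset.Icc 1 X, γ ^ (x - 1) * r x + γ ^ X * o 1 +
      γ * l * (1 - γ ^ X) / (1 - γ) := by
  have h1γ : 0 < 1 - γ := by linarith
  have key : ∀ k, k ≤ X → o 1 ≤
      (1 - γ) * ∑ x ∈ Finset.Icc 1 k, γ ^ (x - 1) * r x +
      γ ^ k * o (if k < X then k + 1 else 1) +
      l * ∑ x ∈ Finset.Icc 1 k, γ ^ x := by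
    intro k
    induction k with
    | zero =>
      intro _
      have h0 : 0 < X := hX
      simp [h0]
    | succ k ih =>
      intro hk1
      have hkX : k < X := lt_of_lt_of_le (Nat.lt_succ_self k) hk1
      have hIH := ih (le_of_lt hkX)
      rw [if_pos hkX] at hIH
      have hx1 : 1 ≤ k + 1 := Nat.succ_le_succ (Nat.zero_le k)
      have hstep := (h1 (k + 1) hx1 hk1).1
      have hw := (h2 (k + 1) hx1 hk1).2
      have hgk : (0:ℝ) ≤ γ ^ k := pow_nonneg hγ0 k
      have ho : o (k + 1) ≤ (1 - γ) * r (k + 1) +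
          γ * (o (if k + 1 < X then k + 1 + 1 else 1) + l) := by
        nlinarith [hstep, hw]
      have hmul : γ ^ k * o (k + 1) ≤ γ ^ k * ((1 - γ) * r (k + 1) +
          γ * (o (if k + 1 < X then k + 1 + 1 else 1) + l)) :=
        mul_le_mul_of_nonneg_left ho hgk
      rw [Finset.sum_Icc_succ_top hx1, Finset.sum_Icc_succ_top hx1]
      have hpow : γ ^ (k + 1 - 1) = γ ^ k := by norm_num
      rw [hpow]
      have hexp : γ ^ k * ((1 - γ) * r (k + 1) +
          γ * (o (if k + 1 < X then k + 1 + 1 else 1) + l)) =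
          (1 - γ) * (γ ^ k * r (k + 1)) +
          γ ^ (k + 1) * o (if k + 1 < X then k + 1 + 1 else 1) + l * γ ^ (k + 1) := by
        rw [pow_succ]; ring
      rw [hexp] at hmul
      nlinarith [hIH, hmul]
  have hfin := key X le_rfl
  rw [if_neg (lt_irrefl X)] at hfin
  have hsum : ∑ x ∈ Finset.Icc 1 X, γ ^ x = γ * (1 - γ ^ X) / (1 - γ) := by
    have hne : γ - 1 ≠ 0 := by linarith
    have hne2 : (1:ℝ) - γ ≠ 0 := by linarith
    have h1 : ∀ n, ∑ x ∈ Finset.Icc 1 n, γ ^ x = ∑ i ∈ Finset.range n, γ ^ (i + 1) := by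
      intro n
      induction n with
      | zero => simp
      | succ n ih =>
        rw [Finset.sum_Icc_succ_top (Nat.succ_le_succ (Nat.zero_le n)), ih,
          Finset.sum_range_succ]
    have hgeom : ∑ i ∈ Finset.range X, γ ^ i = (γ ^ X - 1) / (γ - 1) :=
      geom_sum_eq (by linarith) X
    have h2 : ∑ i ∈ Finset.range X, γ ^ (i + 1) =
        γ * ∑ i ∈ Finset.range X, γ ^ i := by
      rw [Finset.mul_sum]
      exact Finset.sum_congr rfl fun i _ => by ring
    rw [h1 X, h2, hgeom]
    field_simp
    ring
  rw [hsum] at hfin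
  have : l * (γ * (1 - γ ^ X) / (1 - γ)) = γ * l * (1 - γ ^ X) / (1 - γ) := by
    ring
  linarith
end

section
/- Let γ ∈ [0,1) and l ≥ 0 be real numbers, let X ≥ 1 be an integer, and let o, r, w : {1,…,X} → ℝ satisfy, with cyclic successor σ(x) = x+1 for x < X and σ(X) = 1: (i) o(x) ≤ (1−γ)·r(x) + γ·w(x) ≤ o(x) + l and (ii) o(σ(x)) ≤ w(x) ≤ o(σ(x)) + l for every x. Then o(1) ≤ (1−γ)·(∑_{x=1}^{X} γ^{x−1} r(x))/(1 − γ^X) + γ·l/(1 − γ); that is, the origin payoff of the first cycle hypercube exceeds the normalized discounted value of repeating the cycle forever by at most γ·l/(1−γ). -/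
/-- cycle inequalities of the equilibrium graph imply
o(1) ≤ (1−γ)·(∑_{x=1}^{X} γ^{x−1} r(x))/(1 − γ^X) + γ·l/(1 − γ). -/
theorem cycle_origin_normalized_bound (γ l : ℝ) (hγ0 : 0 ≤ γ) (hγ1 : γ < 1) (hl : 0 ≤ l)
    (X : ℕ) (hX : 1 ≤ X) (o r w : ℕ → ℝ)
    (h1 : ∀ x, 1 ≤ x → x ≤ X →
      o x ≤ (1 - γ) * r x + γ * w x ∧ (1 - γ) * r x + γ * w x ≤ o x + l)
    (h2 : ∀ x, 1 ≤ x → x ≤ X →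
      o (if x < X then x + 1 else 1) ≤ w x ∧ w x ≤ o (if x < X then x + 1 else 1) + l) :
    o 1 ≤ (1 - γ) * (∑ x ∈ Finset.Icc 1 X, γ ^ (x - 1) * r x) / (1 - γ ^ X) +
      γ * l / (1 - γ) := by
  -- key one-step bound
  have step : ∀ x, 1 ≤ x → x ≤ X →
      o x ≤ (1 - γ) * r x + γ * o (if x < X then x + 1 else 1) + γ * l := by
    intro x hx1 hx2
    have ha := (h1 x hx1 hx2).1
    have hb := (h2 x hx1 hx2).2
    nlinarith [mul_le_mul_of_nonneg_left hb hγ0]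
  -- unrolled inequality
  have aux : ∀ k, 1 ≤ k → k ≤ X →
      o 1 ≤ (1 - γ) * (∑ x ∈ Finset.Icc 1 k, γ ^ (x - 1) * r x)
        + γ ^ k * o (if k < X then k + 1 else 1)
        + l * (∑ x ∈ Finset.Icc 1 k, γ ^ x) := by
    intro k hk1
    induction k, hk1 using Nat.le_induction with
    | base =>
      intro hkX
      have := step 1 le_rfl hkX
      simp only [Finset.Icc_self, Finset.sum_singleton, pow_one, pow_zero]
      norm_num
      linarith
    | succ k hk ih =>
      intro hkX
      have hk' : k ≤ X := by omega
      have hklt : k < X := by omega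
      have ihk := ih hk'
      rw [if_pos hklt] at ihk
      have hs := step (k + 1) (by omega) hkX
      have hp : (0:ℝ) ≤ γ ^ k := pow_nonneg hγ0 k
      have hmul := mul_le_mul_of_nonneg_left hs hp
      rw [Finset.sum_Icc_succ_top (by omega : 1 ≤ k + 1),
          Finset.sum_Icc_succ_top (by omega : 1 ≤ k + 1)]
      have hsimp : (k + 1) - 1 = k := by omega
      rw [hsimp, pow_succ]
      calc o 1 ≤ (1 - γ) * (∑ x ∈ Finset.Icc 1 k, γ ^ (x - 1) * r x)
            + γ ^ k * o (k + 1) + l * (∑ x ∈ Finset.Icc 1 k, γ ^ x) := ihk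
        _ ≤ (1 - γ) * (∑ x ∈ Finset.Icc 1 k, γ ^ (x - 1) * r x)
            + γ ^ k * ((1 - γ) * r (k + 1) + γ * o (if k + 1 < X then k + 1 + 1 else 1) + γ * l)
            + l * (∑ x ∈ Finset.Icc 1 k, γ ^ x) := by linarith
        _ = (1 - γ) * ((∑ x ∈ Finset.Icc 1 k, γ ^ (x - 1) * r x) + γ ^ k * r (k + 1))
            + γ ^ k * γ * o (if k + 1 < X then k + 1 + 1 else 1)
            + l * ((∑ x ∈ Finset.Icc 1 k, γ ^ x) + γ ^ k * γ) := by ring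
  have hfin := aux X hX le_rfl
  rw [if_neg (lt_irrefl X)] at hfin
  set S := ∑ x ∈ Finset.Icc 1 X, γ ^ (x - 1) * r x with hS
  set T := ∑ x ∈ Finset.Icc 1 X, γ ^ x with hT
  -- geometric identity: (1-γ)*T = γ*(1-γ^X)
  have hgeom' : ∀ n : ℕ, (1 - γ) * (∑ x ∈ Finset.Icc 1 n, γ ^ x) = γ * (1 - γ ^ n) := by
    intro n
    induction n with
    | zero => simp
    | succ n ih =>
      rw [Finset.sum_Icc_succ_top (Nat.succ_le_succ (Nat.zero_le n)), mul_add, ih,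
        pow_succ]
      ring
  have hgeom : (1 - γ) * T = γ * (1 - γ ^ X) := hgeom' X
  have hγX : γ ^ X < 1 := pow_lt_one₀ hγ0 hγ1 (by omega)
  have hc : (0:ℝ) < 1 - γ ^ X := by linarith
  have hd : (0:ℝ) < 1 - γ := by linarith
  rw [div_add_div _ _ hc.ne' hd.ne', le_div_iff₀ (by positivity)]
  nlinarith [hfin, hgeom, mul_le_mul_of_nonneg_left hfin hd.le]
end

section
/- Let γ ∈ [0,1) and l ≥ 0 be real numbers, let Z ≥ 1 be an integer, and let o : {1,…,Z+1} → ℝ and r, w : {1,…,Z} → ℝ satisfy for every z ∈ {1,…,Z}: (i) o(z) ≤ (1−γ)·r(z) + γ·w(z) ≤ o(z) + l and (ii) o(z+1) ≤ w(z) ≤ o(z+1) + l. Then o(1) ≤ (1−γ)·∑_{z=1}^{Z} γ^{z−1} r(z) + γ^Z · o(Z+1) + γ·l·(1 − γ^Z)/(1 − γ). -/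
lemma aux_prefix_bound (γ l : ℝ) (hγ0 : 0 ≤ γ) (hγ1 : γ < 1) (hl : 0 ≤ l)
    (Z : ℕ) (hZ : 1 ≤ Z) (o r w : ℕ → ℝ)
    (h1 : ∀ z, 1 ≤ z → z ≤ Z →
      o z ≤ (1 - γ) * r z + γ * w z ∧ (1 - γ) * r z + γ * w z ≤ o z + l)
    (h2 : ∀ z, 1 ≤ z → z ≤ Z → o (z + 1) ≤ w z ∧ w z ≤ o (z + 1) + l) :
    o 1 ≤ (1 - γ) * ∑ z ∈ Finset.Icc 1 Z, γ ^ (z - 1) * r z + γ ^ Z * o (Z + 1) +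
      l * ∑ z ∈ Finset.Icc 1 Z, γ ^ z := by
  induction Z, hZ using Nat.le_induction with
  | base =>
      simp only [Finset.Icc_self, Finset.sum_singleton, pow_one]
      norm_num
      have ha := (h1 1 le_rfl le_rfl).1
      have hb := (h2 1 le_rfl le_rfl).2
      nlinarith [mul_nonneg hγ0 (sub_nonneg.mpr hb)]
  | succ n hn ih =>
      have IH := ih (fun z hz hz' => h1 z hz (hz'.trans (Nat.le_succ n)))
        (fun z hz hz' => h2 z hz (hz'.trans (Nat.le_succ n)))
      have ha := (h1 (n+1) (by omega) le_rfl).1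
      have hb := (h2 (n+1) (by omega) le_rfl).2
      have hstep : o (n+1) ≤ (1 - γ) * r (n+1) + γ * o (n+2) + γ * l := by nlinarith
      have hsum1 : ∑ z ∈ Finset.Icc 1 (n+1), γ ^ (z - 1) * r z
          = (∑ z ∈ Finset.Icc 1 n, γ ^ (z - 1) * r z) + γ ^ n * r (n+1) := by
        rw [Finset.sum_Icc_succ_top (by omega : 1 ≤ n + 1)]
        norm_num
      have hsum2 : ∑ z ∈ Finset.Icc 1 (n+1), γ ^ z
          = (∑ z ∈ Finset.Icc 1 n, γ ^ z) + γ ^ (n+1) := by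
        rw [Finset.sum_Icc_succ_top (by omega : 1 ≤ n + 1)]
      have hpow : (0:ℝ) ≤ γ ^ n := pow_nonneg hγ0 n
      calc o 1 ≤ (1 - γ) * ∑ z ∈ Finset.Icc 1 n, γ ^ (z - 1) * r z + γ ^ n * o (n + 1) +
            l * ∑ z ∈ Finset.Icc 1 n, γ ^ z := IH
        _ ≤ (1 - γ) * ∑ z ∈ Finset.Icc 1 n, γ ^ (z - 1) * r z +
            γ ^ n * ((1 - γ) * r (n+1) + γ * o (n+2) + γ * l) +
            l * ∑ z ∈ Finset.Icc 1 n, γ ^ z := by nlinarith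
        _ = (1 - γ) * ∑ z ∈ Finset.Icc 1 (n+1), γ ^ (z - 1) * r z + γ ^ (n+1) * o (n + 2) +
            l * ∑ z ∈ Finset.Icc 1 (n+1), γ ^ z := by
          rw [hsum1, hsum2]; ring

/-- prefix inequalities of the equilibrium graph imply
o(1) ≤ (1−γ)·∑_{z=1}^{Z} γ^{z−1} r(z) + γ^Z·o(Z+1) + γ·l·(1 − γ^Z)/(1 − γ). -/
theorem prefix_origin_bound (γ l : ℝ) (hγ0 : 0 ≤ γ) (hγ1 : γ < 1) (hl : 0 ≤ l)
    (Z : ℕ) (hZ : 1 ≤ Z) (o r w : ℕ → ℝ)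
    (h1 : ∀ z, 1 ≤ z → z ≤ Z →
      o z ≤ (1 - γ) * r z + γ * w z ∧ (1 - γ) * r z + γ * w z ≤ o z + l)
    (h2 : ∀ z, 1 ≤ z → z ≤ Z → o (z + 1) ≤ w z ∧ w z ≤ o (z + 1) + l) :
    o 1 ≤ (1 - γ) * ∑ z ∈ Finset.Icc 1 Z, γ ^ (z - 1) * r z + γ ^ Z * o (Z + 1) +
      γ * l * (1 - γ ^ Z) / (1 - γ) := by
  have key := aux_prefix_bound γ l hγ0 hγ1 hl Z hZ o r w h1 h2
  have hne : (1 - γ) ≠ 0 := by intro h; linarith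
  have hne' : (γ - 1) ≠ 0 := sub_ne_zero.mpr (ne_of_lt hγ1)
  have h0 : ∑ z ∈ Finset.range Z, γ ^ z = (1 - γ ^ Z) / (1 - γ) := by
    rw [geom_sum_eq (ne_of_lt hγ1), div_eq_div_iff hne' hne]
    ring
  have h1' : ∑ z ∈ Finset.Icc 1 Z, γ ^ z = γ * ∑ z ∈ Finset.range Z, γ ^ z := by
    rw [← Finset.Ico_add_one_right_eq_Icc, Finset.sum_Ico_eq_sum_range]
    have hzz : Z + 1 - 1 = Z := by omega
    rw [hzz, Finset.mul_sum]
    exact Finset.sum_congr rfl (fun i _ => by rw [pow_add, pow_one])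
  rw [h1', h0] at key
  have heq : l * (γ * ((1 - γ ^ Z) / (1 - γ))) = γ * l * (1 - γ ^ Z) / (1 - γ) := by ring
  linarith [key]
end

section
/- Let γ ∈ [0,1) and l ≥ 0 be real numbers, let Z ≥ 0 and X ≥ 1 be integers, and let o, r, w : {1,…,Z+X} → ℝ satisfy: (i) o(q) ≤ (1−γ)·r(q) + γ·w(q) ≤ o(q) + l for every q ∈ {1,…,Z+X}; (ii) o(q+1) ≤ w(q) ≤ o(q+1) + l for every q ∈ {1,…,Z+X−1}; and (iii) o(Z+1) ≤ w(Z+X) ≤ o(Z+1) + l. Define the eventually periodic payoff stream ρ : ℕ → ℝ by ρ(t) = r(t+1) for t < Z and ρ(Z+k) = r(Z + 1 + (k mod X)) for k ≥ 0, and let v = (1−γ)·∑_{t=0}^∞ γ^t ρ(t). Then o(1) − v ≤ γ·l/(1 − γ). -/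
/-- Lemma ErrorAutomaton: for the equilibrium graph with prefix
states 1,…,Z and cycle states Z+1,…,Z+X, the origin payoff of the initial
hypercube exceeds the induced normalized discounted payoff v by at most
γ·l/(1−γ). -/
theorem error_automaton (γ l : ℝ) (hγ0 : 0 ≤ γ) (hγ1 : γ < 1) (hl : 0 ≤ l)
    (Z X : ℕ) (hX : 1 ≤ X) (o r w : ℕ → ℝ)
    (h1 : ∀ q, 1 ≤ q → q ≤ Z + X →
      o q ≤ (1 - γ) * r q + γ * w q ∧ (1 - γ) * r q + γ * w q ≤ o q + l)
    (h2 : ∀ q, 1 ≤ q → q ≤ Z + X - 1 → o (q + 1) ≤ w q ∧ w q ≤ o (q + 1) + l)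
    (h3 : o (Z + 1) ≤ w (Z + X) ∧ w (Z + X) ≤ o (Z + 1) + l)
    (ρ : ℕ → ℝ)
    (hρ1 : ∀ t, t < Z → ρ t = r (t + 1))
    (hρ2 : ∀ k, ρ (Z + k) = r (Z + 1 + k % X))
    (v : ℝ) (hv : v = (1 - γ) * ∑' t, γ ^ t * ρ t) :
    o 1 - v ≤ γ * l / (1 - γ) := by
  have hγ1' : 0 < 1 - γ := by linarith
  set q : ℕ → ℕ := fun t => if t < Z then t + 1 else Z + 1 + (t - Z) % X with hqdef
  have hq0 : q 0 = 1 := by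
    by_cases h : 0 < Z
    · simp [hqdef, h]
    · have hz : Z = 0 := by omega
      simp [hqdef, hz]
  have hqlb : ∀ t, 1 ≤ q t := by
    intro t
    simp only [hqdef]
    split <;> omega
  have hqub : ∀ t, q t ≤ Z + X := by
    intro t
    simp only [hqdef]
    split
    · omega
    · have hm : (t - Z) % X < X := Nat.mod_lt _ (by omega)
      omega
  have hρ : ∀ t, ρ t = r (q t) := by
    intro t
    by_cases h : t < Z
    · simp only [hqdef]
      rw [if_pos h]
      exact hρ1 t h
    · have ht : t = Z + (t - Z) := by omega
      simp only [hqdef]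
      rw [if_neg h]
      calc ρ t = ρ (Z + (t - Z)) := by rw [← ht]
        _ = r (Z + 1 + (t - Z) % X) := hρ2 _
  have hw : ∀ t, w (q t) ≤ o (q (t + 1)) + l := by
    intro t
    by_cases h : t < Z
    · have hqt : q t = t + 1 := if_pos h
      have hqt1 : q (t + 1) = t + 2 := by
        simp only [hqdef]
        by_cases h' : t + 1 < Z
        · rw [if_pos h']
        · rw [if_neg h']
          have hz : t + 1 = Z := by omega
          have h0 : (t + 1 - Z) % X = 0 := by
            rw [hz, Nat.sub_self, Nat.zero_mod]
          rw [h0]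
          omega
      rw [hqt, hqt1]
      exact (h2 (t + 1) (by omega) (by omega)).2
    · have hk : q t = Z + 1 + (t - Z) % X := if_neg h
      have hk1 : q (t + 1) = Z + 1 + (t + 1 - Z) % X := if_neg (by omega)
      obtain ⟨m, hm, hmlt⟩ : ∃ m, (t - Z) % X = m ∧ m < X :=
        ⟨_, rfl, Nat.mod_lt _ (by omega)⟩
      have hstep : (t + 1 - Z) = (t - Z) + 1 := by omega
      by_cases hc : m + 1 < X
      · have h1X : (1 : ℕ) % X = 1 := Nat.mod_eq_of_lt (by omega)
        have hmod : (t + 1 - Z) % X = m + 1 := by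
          rw [hstep, Nat.add_mod, hm, h1X, Nat.mod_eq_of_lt hc]
        rw [hk, hk1, hmod, hm]
        have hh := (h2 (Z + 1 + m) (by omega) (by omega)).2
        have harr : Z + 1 + (m + 1) = Z + 1 + m + 1 := by omega
        rw [harr]
        exact hh
      · have hmX : m + 1 = X := by omega
        have hzero : (t + 1 - Z) % X = 0 := by
          rw [hstep, Nat.add_mod, hm]
          rcases Nat.lt_or_ge 1 X with h2X | h1X
          · rw [Nat.mod_eq_of_lt h2X, hmX, Nat.mod_self]
          · have hx1 : X = 1 := by omega
            simp [hx1, Nat.mod_one]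
        rw [hk, hk1, hzero, hm]
        have heq : Z + 1 + m = Z + X := by omega
        rw [heq]
        simpa using h3.2
  have hXZ : 1 ≤ Z + X := by omega
  have hmem1 : (1 : ℕ) ∈ Finset.Icc 1 (Z + X) := Finset.mem_Icc.mpr ⟨le_refl 1, hXZ⟩
  obtain ⟨M, hM⟩ : ∃ M, ∀ t, |ρ t| ≤ M := by
    refine ⟨(Finset.Icc 1 (Z + X)).sup' ⟨1, hmem1⟩ (fun i => |r i|), fun t => ?_⟩
    rw [hρ t]
    exact Finset.le_sup' (fun i => |r i|) (Finset.mem_Icc.mpr ⟨hqlb t, hqub t⟩)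
  obtain ⟨N, hN⟩ : ∃ N, ∀ t, |o (q t)| ≤ N :=
    ⟨(Finset.Icc 1 (Z + X)).sup' ⟨1, hmem1⟩ (fun i => |o i|),
      fun t => Finset.le_sup' (fun i => |o i|) (Finset.mem_Icc.mpr ⟨hqlb t, hqub t⟩)⟩
  have hsum : Summable (fun t => γ ^ t * ρ t) := by
    apply Summable.of_norm
    apply Summable.of_nonneg_of_le (fun t => norm_nonneg _) (fun t => ?_)
      ((summable_geometric_of_lt_one hγ0 hγ1).mul_right M)
    calc ‖γ ^ t * ρ t‖ = γ ^ t * |ρ t| := by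
          rw [norm_mul, norm_pow, Real.norm_eq_abs, Real.norm_eq_abs, abs_of_nonneg hγ0]
      _ ≤ γ ^ t * M := mul_le_mul_of_nonneg_left (hM t) (pow_nonneg hγ0 t)
  have hpt : ∀ t, γ ^ t * o (q t) - γ ^ (t + 1) * o (q (t + 1)) - γ ^ (t + 1) * l
      ≤ (1 - γ) * (γ ^ t * ρ t) := by
    intro t
    have hr1 := (h1 (q t) (hqlb t) (hqub t)).1
    have hw1 := hw t
    have hbase : o (q t) - γ * (o (q (t + 1)) + l) ≤ (1 - γ) * ρ t := by
      rw [hρ t]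
      have := mul_le_mul_of_nonneg_left hw1 hγ0
      linarith
    have hmul := mul_le_mul_of_nonneg_left hbase (pow_nonneg hγ0 t)
    have e1 : γ ^ t * (o (q t) - γ * (o (q (t + 1)) + l))
        = γ ^ t * o (q t) - γ ^ (t + 1) * o (q (t + 1)) - γ ^ (t + 1) * l := by ring
    have e2 : γ ^ t * ((1 - γ) * ρ t) = (1 - γ) * (γ ^ t * ρ t) := by ring
    linarith
  have hpartial : ∀ T, o 1 - γ ^ T * o (q T) - γ * l / (1 - γ)
      ≤ ∑ t ∈ Finset.range T, (1 - γ) * (γ ^ t * ρ t) := by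
    intro T
    have htel : ∑ t ∈ Finset.range T, (γ ^ t * o (q t) - γ ^ (t + 1) * o (q (t + 1)))
        = γ ^ 0 * o (q 0) - γ ^ T * o (q T) :=
      Finset.sum_range_sub' (fun t => γ ^ t * o (q t)) T
    have hgeo : ∑ t ∈ Finset.range T, γ ^ (t + 1) * l ≤ γ * l / (1 - γ) := by
      have h0 : ∑ t ∈ Finset.range T, γ ^ (t + 1) * l
          = (γ * l) * ∑ t ∈ Finset.range T, γ ^ t := by
        rw [Finset.mul_sum]
        apply Finset.sum_congr rfl
        intro t _
        ring
      rw [h0]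
      have hle : ∑ t ∈ Finset.range T, γ ^ t ≤ (1 - γ)⁻¹ := by
        have h := Summable.sum_le_tsum (Finset.range T) (fun i _ => pow_nonneg hγ0 i)
          (summable_geometric_of_lt_one hγ0 hγ1)
        rwa [tsum_geometric_of_lt_one hγ0 hγ1] at h
      calc (γ * l) * ∑ t ∈ Finset.range T, γ ^ t ≤ (γ * l) * (1 - γ)⁻¹ :=
            mul_le_mul_of_nonneg_left hle (by positivity)
        _ = γ * l / (1 - γ) := by rw [div_eq_mul_inv]
    have hsum_le : ∑ t ∈ Finset.range T,
        (γ ^ t * o (q t) - γ ^ (t + 1) * o (q (t + 1)) - γ ^ (t + 1) * l)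
        ≤ ∑ t ∈ Finset.range T, (1 - γ) * (γ ^ t * ρ t) :=
      Finset.sum_le_sum (fun t _ => hpt t)
    have hsplit : ∑ t ∈ Finset.range T,
        (γ ^ t * o (q t) - γ ^ (t + 1) * o (q (t + 1)) - γ ^ (t + 1) * l)
        = (γ ^ 0 * o (q 0) - γ ^ T * o (q T)) - ∑ t ∈ Finset.range T, γ ^ (t + 1) * l := by
      rw [← htel, ← Finset.sum_sub_distrib]
    rw [hsplit, hq0] at hsum_le
    simp only [pow_zero, one_mul] at hsum_le
    linarith
  have hsum2 : Summable (fun t => (1 - γ) * (γ ^ t * ρ t)) := hsum.mul_left _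
  have hT1 : Filter.Tendsto (fun T => ∑ t ∈ Finset.range T, (1 - γ) * (γ ^ t * ρ t))
      Filter.atTop (nhds v) := by
    have h := hsum2.hasSum.tendsto_sum_nat
    rwa [tsum_mul_left, ← hv] at h
  have hT2 : Filter.Tendsto (fun T => γ ^ T * o (q T)) Filter.atTop (nhds 0) := by
    apply squeeze_zero_norm (a := fun T => γ ^ T * N) (fun T => ?_)
    · have h := (tendsto_pow_atTop_nhds_zero_of_lt_one hγ0 hγ1).mul_const N
      simpa using h
    · calc ‖γ ^ T * o (q T)‖ = γ ^ T * |o (q T)| := by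
            rw [norm_mul, norm_pow, Real.norm_eq_abs, Real.norm_eq_abs, abs_of_nonneg hγ0]
        _ ≤ γ ^ T * N := mul_le_mul_of_nonneg_left (hN T) (pow_nonneg hγ0 T)
  have hfinal : o 1 - γ * l / (1 - γ) ≤ v := by
    have hT3 : Filter.Tendsto
        (fun T => (∑ t ∈ Finset.range T, (1 - γ) * (γ ^ t * ρ t)) + γ ^ T * o (q T))
        Filter.atTop (nhds (v + 0)) := hT1.add hT2
    rw [add_zero] at hT3
    apply ge_of_tendsto hT3
    filter_upwards with T
    linarith [hpartial T]
  linarith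
end
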